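/- Let f ∈ ℤ[[q]] with constant term 1 and suppose all coefficients of -log f(q) (as a series ∑ (b_n/n) q^n in ℚ[[q]]) satisfy b_n ∈ ℤ. Then the exponents i_k in the product expansion f = ∏(1-q^k)^{i_k} are given by i_k = (1/k)∑_{d|k} μ(d) b_{k/d}, and this is an integer. -/

import Mathlib

/-!
Logarithmic differentiation turns the product into a sum:
`-f'/f = ∑ₖ k iₖ q^(k-1) / (1 - q^k)`, whose coefficient of `q^(n-1)` is `∑_{d ∣ n} d i_d`.
Comparing with `-f'/f = ∑ bₙ q^(n-1)` gives `bₙ = ∑_{d ∣ n} d i_d`, and Möbius inversion yields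
`k iₖ = ∑_{d ∣ k} μ(d) b_{k/d}`.
-/

open PowerSeries Finset

/-- The power series `1 - q^(k+1)`, as a unit of `ℤ⟦X⟧`. -/
noncomputable def oneSubX (k : ℕ) : (PowerSeries ℤ)ˣ :=
  ((PowerSeries.isUnit_iff_constantCoeff (φ := 1 - X ^ (k + 1))).mpr (by simp)).unit

/-- `f = ∏_{k=1}^∞ (1 - q^k)^(i k)` in `ℤ⟦X⟧`, interpreted q-adically. -/
def HasProdExpansion (f : PowerSeries ℤ) (i : ℕ → ℤ) : Prop :=
  ∀ N : ℕ, trunc N f =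
    trunc N ((∏ k ∈ range N, oneSubX k ^ i (k + 1) : (PowerSeries ℤ)ˣ) : PowerSeries ℤ)

/-- `log f = -∑_{n≥1} (b n / n) q^n` in `ℚ⟦q⟧`, encoded via formal differentiation:
since the formal logarithm of `f` (with `f(0) = 1`) is the unique series `g` with
`g(0) = 0` and `f * g′ = f′`, the statement `log f = -∑ (b n / n) q^n` is equivalent to
`f′ = f * (-∑_{n≥1} b n * q^(n-1))`. -/
def LogEq (f : PowerSeries ℤ) (b : ℕ → ℚ) : Prop :=
  (PowerSeries.map (Int.castRingHom ℚ) f).derivativeFun =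
    PowerSeries.map (Int.castRingHom ℚ) f * (-(PowerSeries.mk fun m => b (m + 1)))

theorem Nat.sum_range_ite_succ_dvd {M : Type*} [AddCommMonoid M] (g : ℕ → M) {n N : ℕ}
    (hn : n ≠ 0) (hN : n ≤ N) :
    ∑ k ∈ range N, (if k + 1 ∣ n then g (k + 1) else 0) = ∑ d ∈ n.divisors, g d := by
  have hshift : ∑ k ∈ range N, (if k + 1 ∣ n then g (k + 1) else 0) =
      ∑ d ∈ range (N + 1), if d ∣ n then g d else 0 := by
    rw [sum_range_succ', if_neg (by rwa [zero_dvd_iff]), add_zero]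
  rw [hshift, ← Nat.filter_dvd_eq_divisors hn, sum_filter]
  refine (sum_subset (range_subset_range.mpr (by omega)) fun d _ hd => ?_).symm
  exact if_neg fun hdvd => hd (mem_range.mpr (Nat.lt_succ_of_le (Nat.le_of_dvd (by omega) hdvd)))

namespace PowerSeries

section LogDeriv

variable {R : Type*} [CommRing R]

noncomputable def logDerivUnit (u : R⟦X⟧ˣ) : R⟦X⟧ := ↑u⁻¹ * d⁄dX R u

theorem derivative_eq_mul_logDerivUnit (u : R⟦X⟧ˣ) : d⁄dX R u = u * logDerivUnit u := by
  rw [logDerivUnit, ← mul_assoc, Units.mul_inv, one_mul]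

theorem logDerivUnit_mul (u v : R⟦X⟧ˣ) :
    logDerivUnit (u * v) = logDerivUnit u + logDerivUnit v := by
  rw [logDerivUnit, Units.val_mul, Derivation.leibniz, smul_eq_mul, smul_eq_mul,
    derivative_eq_mul_logDerivUnit u, derivative_eq_mul_logDerivUnit v, mul_inv_rev, Units.val_mul]
  linear_combination (↑v⁻¹ * ↑v * (logDerivUnit u + logDerivUnit v)) * u.inv_mul
    + (logDerivUnit u + logDerivUnit v) * v.inv_mul

noncomputable def logDerivUnitHom : R⟦X⟧ˣ →* Multiplicative R⟦X⟧ :=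
  MonoidHom.mk' (fun u => .ofAdd (logDerivUnit u)) logDerivUnit_mul

theorem logDerivUnit_zpow (u : R⟦X⟧ˣ) (n : ℤ) : logDerivUnit (u ^ n) = n • logDerivUnit u :=
  congrArg Multiplicative.toAdd (map_zpow logDerivUnitHom u n)

theorem logDerivUnit_prod {ι : Type*} (s : Finset ι) (u : ι → R⟦X⟧ˣ) :
    logDerivUnit (∏ k ∈ s, u k) = ∑ k ∈ s, logDerivUnit (u k) :=
  congrArg Multiplicative.toAdd (map_prod logDerivUnitHom u s)

end LogDeriv

theorem one_sub_X_pow_mul_mk_dvd {R : Type*} [Ring R] (k : ℕ) :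
    (1 - X ^ (k + 1) : R⟦X⟧) * mk (fun n => if k + 1 ∣ n + 1 then 1 else 0) = X ^ k := by
  ext n
  rw [sub_mul, one_mul, map_sub, coeff_X_pow_mul', coeff_mk, coeff_X_pow]
  by_cases hkn : k + 1 ≤ n
  · have hn : n + 1 = n - (k + 1) + 1 + (k + 1) := by omega
    simp only [if_pos hkn, coeff_mk, hn, Nat.dvd_add_self_right, if_neg (show n ≠ k by omega),
      sub_self]
  · have hdvd : k + 1 ∣ n + 1 ↔ n = k :=
      ⟨fun h => by have := Nat.le_of_dvd (by omega) h; omega, fun h => h ▸ dvd_rfl⟩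
    simp only [if_neg hkn, sub_zero, hdvd]

theorem derivative_one_sub_X_pow {R : Type*} [CommRing R] (k : ℕ) :
    d⁄dX R (1 - X ^ (k + 1)) = -(C ((k : R) + 1) * X ^ k) := by
  simp

theorem derivative_map {R S : Type*} [CommSemiring R] [CommSemiring S] (φ : R →+* S)
    (f : R⟦X⟧) : d⁄dX S (map φ f) = map φ (d⁄dX R f) := by
  ext n
  simp [coeff_derivative]

end PowerSeries

theorem oneSubX_val (k : ℕ) : (oneSubX k : ℤ⟦X⟧) = 1 - X ^ (k + 1) :=
  IsUnit.unit_spec _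

theorem coeff_logDerivUnit_oneSubX (k n : ℕ) :
    coeff n (logDerivUnit (oneSubX k)) = if k + 1 ∣ n + 1 then -(k + 1 : ℤ) else 0 := by
  set S : ℤ⟦X⟧ := mk fun n => if k + 1 ∣ n + 1 then 1 else 0
  have hlog : logDerivUnit (oneSubX k) = -(C ((k : ℤ) + 1) * S) := by
    rw [logDerivUnit, oneSubX_val, derivative_one_sub_X_pow, ← one_sub_X_pow_mul_mk_dvd k,
      ← oneSubX_val]
    linear_combination -(C ((k : ℤ) + 1) * S) * (oneSubX k).inv_mul
  rw [hlog, map_neg, coeff_C_mul, coeff_mk]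
  split_ifs <;> simp

noncomputable def divisorSumSeries (i : ℕ → ℤ) : ℤ⟦X⟧ :=
  mk fun n => ∑ d ∈ (n + 1).divisors, (d : ℤ) * i d

theorem coeff_logDerivUnit_prod_oneSubX (i : ℕ → ℤ) {n N : ℕ} (hn : n < N) :
    coeff n (logDerivUnit (∏ k ∈ range N, oneSubX k ^ i (k + 1))) =
      -coeff n (divisorSumSeries i) := by
  simp only [logDerivUnit_prod, logDerivUnit_zpow, map_sum, map_zsmul, coeff_logDerivUnit_oneSubX,
    smul_eq_mul, mul_ite, mul_zero, divisorSumSeries, coeff_mk, ← sum_neg_distrib]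
  rw [← Nat.sum_range_ite_succ_dvd _ n.succ_ne_zero hn]
  refine sum_congr rfl fun k _ => ?_
  split_ifs
  · push_cast
    ring
  · rfl

theorem HasProdExpansion.derivative_eq {f : ℤ⟦X⟧} {i : ℕ → ℤ} (hi : HasProdExpansion f i) :
    d⁄dX ℤ f = -(f * divisorSumSeries i) := by
  ext n
  -- coefficient `n` of either side only sees the factors `1 - q^k` with `k ≤ n + 1`
  set P : ℤ⟦X⟧ˣ := ∏ k ∈ range (n + 2), oneSubX k ^ i (k + 1)
  have htrunc : trunc (n + 1) (P : ℤ⟦X⟧) = trunc (n + 1) f := by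
    rw [← trunc_trunc_of_le f (Nat.le_succ _), hi (n + 2), trunc_trunc_of_le _ (Nat.le_succ _)]
  have hlog : trunc (n + 1) (logDerivUnit P) = trunc (n + 1) (-divisorSumSeries i) := by
    ext m
    rw [coeff_trunc, coeff_trunc, map_neg]
    split_ifs with hm
    · exact coeff_logDerivUnit_prod_oneSubX i (by omega)
    · rfl
  calc coeff n (d⁄dX ℤ f) = coeff n (d⁄dX ℤ (P : ℤ⟦X⟧)) := by
        rw [← coeff_coe_trunc_of_lt (lt_add_one n), trunc_derivative, hi (n + 2),
          ← trunc_derivative, coeff_coe_trunc_of_lt (lt_add_one n)]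
    _ = coeff n ((P : ℤ⟦X⟧) * logDerivUnit P) := by rw [derivative_eq_mul_logDerivUnit]
    _ = coeff n (-(f * divisorSumSeries i)) := by
        rw [coeff_mul_eq_coeff_trunc_mul_trunc _ _ (lt_add_one n), htrunc, hlog,
          ← coeff_mul_eq_coeff_trunc_mul_trunc _ _ (lt_add_one n), mul_neg]

theorem LogEq.coeff_eq_of_derivative_eq {f g : ℤ⟦X⟧} {b : ℕ → ℤ} (hf : constantCoeff f = 1)
    (hb : LogEq f fun n => (b n : ℚ)) (hd : d⁄dX ℤ f = -(f * g)) (n : ℕ) :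
    b (n + 1) = coeff n g := by
  set F := map (Int.castRingHom ℚ) f
  have hF : F ≠ 0 := fun h => by simpa [F, coeff_map, hf] using congrArg (coeff 0) h
  have hmul : F * -(mk fun m => (b (m + 1) : ℚ)) = F * -map (Int.castRingHom ℚ) g := by
    calc F * -(mk fun m => (b (m + 1) : ℚ)) = d⁄dX ℚ F := hb.symm
      _ = F * -map (Int.castRingHom ℚ) g := by rw [derivative_map, hd, map_neg, map_mul, mul_neg]
  have hcoeff := congrArg (coeff n) (neg_injective (mul_left_cancel₀ hF hmul))
  simpa using hcoeff

/-- If all the coefficients `b n` (with `log f = -∑ (b n / n) q^n`) are integers, then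
`i k = (1/k) ∑_{d ∣ k} μ(d) b (k/d)`, and this is an integer, i.e. the sum is
divisible by `k`. -/
theorem exponent_formula_int (f : PowerSeries ℤ) (hf : constantCoeff f = 1)
    (i : ℕ → ℤ) (hi : HasProdExpansion f i) (b : ℕ → ℤ)
    (hb : LogEq f (fun n => (b n : ℚ))) :
    ∀ k : ℕ, 1 ≤ k →
      (k : ℤ) ∣ (∑ d ∈ Nat.divisors k, (ArithmeticFunction.moebius d : ℤ) * b (k / d)) ∧
      i k = (∑ d ∈ Nat.divisors k, (ArithmeticFunction.moebius d : ℤ) * b (k / d)) / k := by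
  have hsum : ∀ n : ℕ, n > 0 → ∑ d ∈ n.divisors, (d : ℤ) * i d = b n := by
    rintro (_ | n) hn
    · exact absurd hn (lt_irrefl 0)
    · rw [hb.coeff_eq_of_derivative_eq hf hi.derivative_eq n, divisorSumSeries, coeff_mk]
  intro k hk
  have hinv : ∑ d ∈ k.divisors, (ArithmeticFunction.moebius d : ℤ) * b (k / d) = k * i k := by
    rw [← Nat.sum_divisorsAntidiagonal fun x y => (ArithmeticFunction.moebius x : ℤ) * b y]
    exact ArithmeticFunction.sum_eq_iff_sum_mul_moebius_eq.mp hsum k hk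
  rw [hinv]
  exact ⟨dvd_mul_right _ _, (Int.mul_ediv_cancel_left _ (by positivity)).symm⟩
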